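/- For every natural number n ≥ 1, White has a winning strategy in the game G_n. The game G_n is played on a board with 2^n columns and n rows (rows numbered 0,…,n−1 from bottom to top). White and Black move alternately, White first, for ω rounds; on each move a player may pass, or place a pawn of his/her color on some cell; Black may instead blacken some cell. Pawns and blackenings are never removed. Constraints: for each i, each player places at most 2^i pawns in total in row i; Black blackens at most ⌊n/2⌋ cells in each column. A player violating a constraint loses immediately. In the limit position, a white pawn on cell (column x, row i) is dead if that cell is blackened or some black pawn lies in column x in a row strictly below i. If no constraint is violated, Black wins if every white pawn is dead, and White wins otherwise (i.e., if at least one white pawn is alive). -/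

import Mathlib

/-- A cell of the board of the game `G n`: a column (one of `2^n`) and a row
(one of `n`, numbered from the bottom). -/
abbrev Cell (n : ℕ) := Fin (2 ^ n) × Fin n

/-- A move of White: pass (`none`) or place a white pawn on a cell. -/
abbrev WMove (n : ℕ) := Option (Cell n)

/-- A move of Black: pass (`none`), place a black pawn on a cell (`some (inl c)`),
or blacken a cell (`some (inr c)`). -/
abbrev BMove (n : ℕ) := Option (Cell n ⊕ Cell n)

/-- A strategy for White: the next move as a function of the list of Black's previous
moves. -/
abbrev WStrat (n : ℕ) := List (BMove n) → WMove n

/-- A strategy for Black: the next move as a function of the list of White's previous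
moves (including White's move of the current round, since White moves first). -/
abbrev BStrat (n : ℕ) := List (WMove n) → BMove n

/-- The history of the first `k` rounds of the play in which White follows `σ` and Black
follows `τ`; in each round White moves first. -/
def hist (n : ℕ) (σ : WStrat n) (τ : BStrat n) : ℕ → List (WMove n × BMove n)
  | 0 => []
  | k + 1 =>
    let h := hist n σ τ k
    let wm := σ (h.map Prod.snd)
    let bm := τ (h.map Prod.fst ++ [wm])
    h ++ [(wm, bm)]

/-- White's move in round `k` of the play `σ` versus `τ`. -/
def wmove (n : ℕ) (σ : WStrat n) (τ : BStrat n) (k : ℕ) : WMove n :=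
  σ ((hist n σ τ k).map Prod.snd)

/-- Black's move in round `k` of the play `σ` versus `τ`. -/
def bmove (n : ℕ) (σ : WStrat n) (τ : BStrat n) (k : ℕ) : BMove n :=
  τ ((hist n σ τ k).map Prod.fst ++ [wmove n σ τ k])

/-- White violates a constraint at her move of round `k`: for some row `i`, more than
`2^i` white pawns have been placed in row `i` during rounds `0,…,k`. -/
def WViol (n : ℕ) (w : ℕ → WMove n) (k : ℕ) : Prop :=
  ∃ i : Fin n, 2 ^ (i : ℕ) < {j : ℕ | j ≤ k ∧ ∃ col, w j = some (col, i)}.ncard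

/-- Black violates a constraint at his move of round `k`: for some row `i`, more than
`2^i` black pawns have been placed in row `i` during rounds `0,…,k`, or for some column
more than `⌊n/2⌋` of its cells have been blackened during rounds `0,…,k`. -/
def BViol (n : ℕ) (b : ℕ → BMove n) (k : ℕ) : Prop :=
  (∃ i : Fin n, 2 ^ (i : ℕ) <
      {j : ℕ | j ≤ k ∧ ∃ col, b j = some (Sum.inl (col, i))}.ncard) ∨
  (∃ col : Fin (2 ^ n), n / 2 <
      {i : Fin n | ∃ j ≤ k, b j = some (Sum.inr (col, i))}.ncard)

/-- In the limit position, some white pawn is alive: it sits on a cell that is never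
blackened and has no black pawn strictly below it in its column. -/
def Alive (n : ℕ) (w : ℕ → WMove n) (b : ℕ → BMove n) : Prop :=
  ∃ (k : ℕ) (col : Fin (2 ^ n)) (i : Fin n), w k = some (col, i) ∧
    (∀ j : ℕ, b j ≠ some (Sum.inr (col, i))) ∧
    (∀ (j : ℕ) (i' : Fin n), (i' : ℕ) < (i : ℕ) → b j ≠ some (Sum.inl (col, i')))

/-- White wins the play `(w, b)`: either Black is the first to violate a constraint
(at some round `k`, White having been clean at all her moves up to and including round
`k`), or nobody ever violates a constraint and some white pawn is alive in the limit. -/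
def WhiteWins (n : ℕ) (w : ℕ → WMove n) (b : ℕ → BMove n) : Prop :=
  (∃ k : ℕ, BViol n b k ∧ ∀ j ≤ k, ¬ WViol n w j) ∨
  ((∀ k, ¬ WViol n w k) ∧ (∀ k, ¬ BViol n b k) ∧ Alive n w b)

/-!
White keeps one designated pawn, starting at the top of column `0`. When Black blackens its
cell, White places a new pawn on the highest unblackened cell below it; when Black puts a pawn
below it in its column, White moves to a column without black pawns below the top row and
places a pawn on the highest unblackened cell there. Every cell above the designated pawn is
blackened, so it can only get stuck in a column whose `n > ⌊n/2⌋` cells are all blackened, and a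
suitable column exists because fewer than `2^(n-1)` black pawns lie below the top row. A white
pawn in row `r` is placed either after an eviction from a row `≤ r`, which costs Black a pawn
in a row `< r` (fewer than `2^r` of them), or once while descending; so White respects her
bounds, places finitely many pawns, and the last of them is never killed.
-/

namespace PawnGame

open Finset Classical

variable {n : ℕ}

lemma ncard_setOf_le_and_eq_count (p : ℕ → Prop) [DecidablePred p] (k : ℕ) :
    {j : ℕ | j ≤ k ∧ p j}.ncard = Nat.count p (k + 1) := by
  rw [Nat.count_eq_card_filter_range, ← Set.ncard_coe_finset]
  congr 1
  ext j
  simp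

lemma finite_setOf_of_count_le {p : ℕ → Prop} [DecidablePred p] {M : ℕ}
    (h : ∀ k, Nat.count p k ≤ M) : {j | p j}.Finite := by
  by_contra hinf
  obtain ⟨T, hTp, hTcard⟩ := Set.Infinite.exists_subset_card_eq hinf (M + 1)
  obtain ⟨k, hTk⟩ := T.exists_nat_subset_range
  have hsub : T ⊆ (range k).filter p := fun j hj => mem_filter.mpr ⟨hTk hj, hTp hj⟩
  have hcard := card_le_card hsub
  rw [← Nat.count_eq_card_filter_range] at hcard
  have := h k
  omega

section BlackBounds

variable (B : ℕ → BMove n)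

def BlackPawnBelow (r : ℕ) (b : BMove n) : Prop :=
  ∃ x, ∃ m : Fin n, (m : ℕ) < r ∧ b = some (.inl (x, m))

lemma count_blackPawnBelow_lt {k : ℕ} (h : ¬ BViol n B k) (r : ℕ) :
    Nat.count (fun j => BlackPawnBelow r (B j)) (k + 1) < 2 ^ r := by
  have hrow : ∀ m : Fin n,
      #{j ∈ range (k + 1) | ∃ x, B j = some (.inl (x, m))} ≤ 2 ^ (m : ℕ) := fun m => by
    rw [← Nat.count_eq_card_filter_range, ← ncard_setOf_le_and_eq_count]
    exact not_lt.mp fun hm => h (.inl ⟨m, hm⟩)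
  have hsub : {j ∈ range (k + 1) | BlackPawnBelow r (B j)} ⊆
      (univ.filter fun m : Fin n => (m : ℕ) < r).biUnion
        fun m => {j ∈ range (k + 1) | ∃ x, B j = some (.inl (x, m))} := by
    intro j hj
    obtain ⟨hjk, x, m, hmr, hBj⟩ := mem_filter.mp hj
    simp only [mem_biUnion, mem_filter, mem_univ, true_and]
    exact ⟨m, hmr, hjk, x, hBj⟩
  rw [Nat.count_eq_card_filter_range]
  calc _ ≤ ∑ m ∈ (univ.filter fun m : Fin n => (m : ℕ) < r),
          #{j ∈ range (k + 1) | ∃ x, B j = some (.inl (x, m))} :=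
        (card_le_card hsub).trans card_biUnion_le
    _ ≤ ∑ m ∈ (univ.filter fun m : Fin n => (m : ℕ) < r), 2 ^ (m : ℕ) :=
        sum_le_sum fun m _ => hrow m
    _ = ∑ i ∈ (univ.filter fun m : Fin n => (m : ℕ) < r).map Fin.valEmbedding, 2 ^ i := by
        rw [sum_map]; rfl
    _ < 2 ^ r := Nat.geomSum_lt le_rfl fun i hi => by
        obtain ⟨m, hm, rfl⟩ := mem_map.mp hi
        simpa using hm

end BlackBounds

section Strategy

def Blackened (bs : List (BMove n)) (c : Cell n) : Prop := some (.inr c) ∈ bs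

def HasBlackPawn (bs : List (BMove n)) (c : Cell n) : Prop := some (.inl c) ∈ bs

/-- A black pawn in the top row kills nothing, so it does not spoil its column. -/
def CleanColumn (bs : List (BMove n)) (x : Fin (2 ^ n)) : Prop :=
  ∀ m : Fin n, (m : ℕ) + 1 < n → ¬ HasBlackPawn bs (x, m)

structure IsLiveTop (bs : List (BMove n)) (c : Cell n) : Prop where
  not_blackened : ¬ Blackened bs c
  no_pawn_below : ∀ m < c.2, ¬ HasBlackPawn bs (c.1, m)
  above_blackened : ∀ i, c.2 < i → Blackened bs (c.1, i)

variable {bs : List (BMove n)} {b : BMove n} {c : Cell n} {x : Fin (2 ^ n)} {i j : Fin n}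

lemma blackened_append : Blackened (bs ++ [b]) c ↔ Blackened bs c ∨ b = some (.inr c) := by
  simp [Blackened, eq_comm]

lemma hasBlackPawn_append :
    HasBlackPawn (bs ++ [b]) c ↔ HasBlackPawn bs c ∨ b = some (.inl c) := by
  simp [HasBlackPawn, eq_comm]

noncomputable def freeRowsBelow (bs : List (BMove n)) (x : Fin (2 ^ n)) (r : ℕ) :
    Finset (Fin n) :=
  {j | (j : ℕ) < r ∧ ¬ Blackened bs (x, j)}

noncomputable def highestFreeBelow (bs : List (BMove n)) (x : Fin (2 ^ n)) (r : ℕ) :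
    Option (Fin n) :=
  if h : (freeRowsBelow bs x r).Nonempty then some ((freeRowsBelow bs x r).max' h) else none

lemma mem_freeRowsBelow {r : ℕ} :
    j ∈ freeRowsBelow bs x r ↔ (j : ℕ) < r ∧ ¬ Blackened bs (x, j) := by
  simp [freeRowsBelow]

lemma highestFreeBelow_eq_some {r : ℕ} (h : highestFreeBelow bs x r = some j) :
    (j : ℕ) < r ∧ ¬ Blackened bs (x, j) ∧
      ∀ j' : Fin n, (j' : ℕ) < r → j < j' → Blackened bs (x, j') := by
  unfold highestFreeBelow at h
  split_ifs at h with hne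
  obtain rfl := Option.some.inj h
  refine ⟨(mem_freeRowsBelow.mp (max'_mem _ hne)).1, (mem_freeRowsBelow.mp (max'_mem _ hne)).2,
    fun j' hj' hlt => ?_⟩
  by_contra hb
  exact (le_max' _ j' (mem_freeRowsBelow.mpr ⟨hj', hb⟩)).not_gt hlt

lemma highestFreeBelow_eq_none {r : ℕ} (h : highestFreeBelow bs x r = none) :
    ∀ j : Fin n, (j : ℕ) < r → Blackened bs (x, j) := by
  unfold highestFreeBelow at h
  split_ifs at h with hne
  intro j hj
  by_contra hb
  exact hne ⟨j, mem_freeRowsBelow.mpr ⟨hj, hb⟩⟩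

noncomputable def relocate (bs : List (BMove n)) : Option (Cell n) :=
  if h : ∃ x, CleanColumn bs x then (highestFreeBelow bs h.choose n).map (h.choose, ·) else none

lemma isLiveTop_of_relocate_eq_some (h : relocate bs = some c) : IsLiveTop bs c := by
  unfold relocate at h
  split_ifs at h with hx
  obtain ⟨e, he, rfl⟩ := Option.map_eq_some_iff.mp h
  obtain ⟨-, hfree, habove⟩ := highestFreeBelow_eq_some he
  exact ⟨hfree, fun m hm => hx.choose_spec m (by omega),
    fun i hi => habove i i.isLt hi⟩

lemma relocate_eq_none (h : relocate bs = none) :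
    (∃ x, ∀ j : Fin n, Blackened bs (x, j)) ∨ ∀ x, ¬ CleanColumn bs x := by
  unfold relocate at h
  split_ifs at h with hx
  · exact .inl ⟨hx.choose, fun j =>
      highestFreeBelow_eq_none (Option.map_eq_none_iff.mp h) j j.isLt⟩
  · exact .inr (not_exists.mp hx)

/-- White's memory: Black's moves so far, the cell of her designated pawn (`none` once she has
given up, which happens only after Black has broken a rule), and her move of this round. -/
structure St (n : ℕ) where
  bs : List (BMove n)
  cur : Option (Cell n)
  out : WMove n

def St.moveTo (bs : List (BMove n)) (c : Option (Cell n)) : St n := ⟨bs, c, c⟩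

noncomputable def step (s : St n) (b : BMove n) : St n :=
  match s.cur with
  | none => ⟨s.bs ++ [b], none, none⟩
  | some (x, i) =>
    if b = some (.inr (x, i)) then
      .moveTo (s.bs ++ [b]) ((highestFreeBelow (s.bs ++ [b]) x i).map (x, ·))
    else if ∃ m < i, b = some (.inl (x, m)) then
      .moveTo (s.bs ++ [b]) (relocate (s.bs ++ [b]))
    else ⟨s.bs ++ [b], some (x, i), none⟩

variable {s : St n}

lemma step_of_cur_eq_none (h : s.cur = none) : step s b = ⟨s.bs ++ [b], none, none⟩ := by
  simp [step, h]

lemma step_cases (h : s.cur = some (x, i)) (b : BMove n) :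
    (b = some (.inr (x, i)) ∧
      step s b = .moveTo (s.bs ++ [b]) ((highestFreeBelow (s.bs ++ [b]) x i).map (x, ·))) ∨
    (∃ m < i, b = some (.inl (x, m)) ∧
      step s b = .moveTo (s.bs ++ [b]) (relocate (s.bs ++ [b]))) ∨
    (b ≠ some (.inr (x, i)) ∧ (∀ m < i, b ≠ some (.inl (x, m))) ∧
      step s b = ⟨s.bs ++ [b], some (x, i), none⟩) := by
  by_cases hb : b = some (.inr (x, i))
  · exact .inl ⟨hb, by simp [step, h, hb]⟩
  by_cases hk : ∃ m < i, b = some (.inl (x, m))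
  · obtain ⟨m, hm, hbm⟩ := hk
    refine .inr (.inl ⟨m, hm, hbm, ?_⟩)
    simp only [step, h, if_neg hb, if_pos (⟨m, hm, hbm⟩ : ∃ m < i, b = some (.inl (x, m)))]
  · refine .inr (.inr ⟨hb, fun m hm hbm => hk ⟨m, hm, hbm⟩, ?_⟩)
    simp only [step, h, if_neg hb, if_neg hk]

lemma step_bs : (step s b).bs = s.bs ++ [b] := by
  unfold step
  split
  · rfl
  · split_ifs <;> rfl

lemma cur_step_of_out_eq_some (h : (step s b).out = some c) : (step s b).cur = some c := by
  rcases hs : s.cur with _ | ⟨x, i⟩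
  · simp [step_of_cur_eq_none hs] at h
  · rcases step_cases hs b with ⟨-, hstep⟩ | ⟨-, -, -, hstep⟩ | ⟨-, -, hstep⟩ <;>
      rw [hstep] at h ⊢
    exacts [h, h, by simp at h]

lemma isLiveTop_step (hs : s.cur = some c) (hc : IsLiveTop s.bs c) {c' : Cell n}
    (h : (step s b).cur = some c') : IsLiveTop (s.bs ++ [b]) c' := by
  obtain ⟨x, i⟩ := c
  rcases step_cases hs b with ⟨rfl, hstep⟩ | ⟨m, hm, rfl, hstep⟩ | ⟨hb, hk, hstep⟩ <;>
    rw [hstep] at h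
  · obtain ⟨j, hj, rfl⟩ := Option.map_eq_some_iff.mp h
    obtain ⟨hji, hfree, habove⟩ := highestFreeBelow_eq_some hj
    refine ⟨hfree, fun m hm hpawn => ?_, fun i' hi' => ?_⟩
    · rcases hasBlackPawn_append.mp hpawn with hpawn | hpawn
      · exact hc.no_pawn_below m (hm.trans hji) hpawn
      · simp at hpawn
    · rcases lt_trichotomy i' i with hlt | rfl | hgt
      · exact habove i' hlt hi'
      · exact blackened_append.mpr (.inr rfl)
      · exact blackened_append.mpr (.inl (hc.above_blackened i' hgt))
  · exact isLiveTop_of_relocate_eq_some h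
  · obtain rfl := Option.some.inj h
    refine ⟨fun hbl => ?_, fun m hm hpawn => ?_, fun i' hi' => ?_⟩
    · exact (blackened_append.mp hbl).elim hc.not_blackened hb
    · exact (hasBlackPawn_append.mp hpawn).elim (hc.no_pawn_below m hm) (hk m hm)
    · exact blackened_append.mpr (.inl (hc.above_blackened i' hi'))

lemma step_cur_eq_none (hs : s.cur = some c) (hc : IsLiveTop s.bs c)
    (h : (step s b).cur = none) :
    (∃ x, ∀ j : Fin n, Blackened (s.bs ++ [b]) (x, j)) ∨
      ∀ x, ¬ CleanColumn (s.bs ++ [b]) x := by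
  obtain ⟨x, i⟩ := c
  rcases step_cases hs b with ⟨rfl, hstep⟩ | ⟨m, hm, rfl, hstep⟩ | ⟨hb, hk, hstep⟩ <;>
    rw [hstep] at h
  · refine .inl ⟨x, fun j => ?_⟩
    rcases lt_trichotomy j i with hlt | rfl | hgt
    · exact highestFreeBelow_eq_none (Option.map_eq_none_iff.mp h) j hlt
    · exact blackened_append.mpr (.inr rfl)
    · exact blackened_append.mpr (.inl (hc.above_blackened j hgt))
  · exact relocate_eq_none h
  · simp at h

lemma step_of_out_eq_none (hs : s.cur = some c) (hout : (step s b).out = none)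
    (hcur : (step s b).cur ≠ none) :
    (step s b).cur = some c ∧ b ≠ some (.inr c) ∧
      ∀ m < c.2, b ≠ some (.inl (c.1, m)) := by
  obtain ⟨x, i⟩ := c
  rcases step_cases hs b with ⟨-, hstep⟩ | ⟨-, -, -, hstep⟩ | ⟨hb, hk, hstep⟩ <;>
    rw [hstep] at hout hcur ⊢
  · exact absurd hout hcur
  · exact absurd hout hcur
  · exact ⟨rfl, hb, hk⟩

def PlacesIn (s : St n) (r : Fin n) : Prop := ∃ x, s.out = some (x, r)

def AtOrBelow (s : St n) (r : Fin n) : Prop := ∀ c ∈ s.cur, c.2 ≤ r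

def Evicts (s : St n) (b : BMove n) (r : Fin n) : Prop :=
  ∃ c ∈ s.cur, c.2 ≤ r ∧ ∃ m < c.2, b = some (.inl (c.1, m))

/-- Between two placements in row `r` White's pawn must come back up to row `r`, which only an
eviction from a row `≤ r` achieves; `AtOrBelow` accounts for the one descent into row `r`. -/
lemma step_placesIn_add_le (r : Fin n) :
    (if PlacesIn (step s b) r then 1 else 0) + (if AtOrBelow s r then 1 else 0) ≤
      (if Evicts s b r then 1 else 0) + (if AtOrBelow (step s b) r then 1 else 0) := by
  rcases hs : s.cur with _ | ⟨x, i⟩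
  · simp [step_of_cur_eq_none hs, PlacesIn, AtOrBelow, hs]
  rcases step_cases hs b with ⟨rfl, hstep⟩ | ⟨m, hm, rfl, hstep⟩ | ⟨hb, hk, hstep⟩ <;>
    rw [hstep]
  · rcases hj : highestFreeBelow (s.bs ++ [some (.inr (x, i))]) x i with _ | j
    · simp [St.moveTo, PlacesIn, AtOrBelow, hj, hs]
      split_ifs <;> omega
    · have hji := (highestFreeBelow_eq_some hj).1
      simp [St.moveTo, PlacesIn, AtOrBelow, Evicts, hj, hs]
      split_ifs <;> omega
  · rcases hrel : relocate (s.bs ++ [some (.inl (x, m))]) with _ | ⟨x', e⟩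
    · simp [St.moveTo, PlacesIn, AtOrBelow, Evicts, hs, hrel]
      split_ifs <;> omega
    · simp [St.moveTo, PlacesIn, AtOrBelow, Evicts, hs, hm, hrel]
      split_ifs <;> omega
  · simp [PlacesIn, AtOrBelow, Evicts, hs]

end Strategy

lemma hist_map_snd (σ : WStrat n) (τ : BStrat n) (k : ℕ) :
    (hist n σ τ k).map Prod.snd = (List.range k).map (bmove n σ τ) := by
  induction k with
  | zero => rfl
  | succ k ih =>
    change (hist n σ τ k ++ [(wmove n σ τ k, bmove n σ τ k)]).map Prod.snd = _
    rw [List.map_append, ih, List.range_succ, List.map_append]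
    rfl

section Play

variable [NeZero n] (B : ℕ → BMove n)

noncomputable def init : St n := .moveTo [] (some (0, ⟨n - 1, Nat.sub_one_lt (NeZero.ne n)⟩))

noncomputable def run (k : ℕ) : St n := ((List.range k).map B).foldl step init

lemma run_zero : run B 0 = init := rfl

lemma run_succ (k : ℕ) : run B (k + 1) = step (run B k) (B k) := by
  simp only [run, List.range_succ, List.map_append, List.foldl_append, List.map_cons,
    List.map_nil, List.foldl_cons, List.foldl_nil]

lemma run_bs (k : ℕ) : (run B k).bs = (List.range k).map B := by
  induction k with
  | zero => rfl
  | succ k ih => rw [run_succ, step_bs, ih, List.range_succ, List.map_append]; rfl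

lemma blackened_run_bs {k : ℕ} {c : Cell n} :
    Blackened (run B k).bs c ↔ ∃ j < k, B j = some (.inr c) := by
  simp [Blackened, run_bs]

lemma hasBlackPawn_run_bs {k : ℕ} {c : Cell n} :
    HasBlackPawn (run B k).bs c ↔ ∃ j < k, B j = some (.inl c) := by
  simp [HasBlackPawn, run_bs]

lemma isLiveTop_run {k : ℕ} {c : Cell n} (h : (run B k).cur = some c) :
    IsLiveTop (run B k).bs c := by
  induction k generalizing c with
  | zero =>
    obtain rfl : (0, ⟨n - 1, _⟩) = c := Option.some.inj h
    refine ⟨by simp [Blackened, run_zero, init, St.moveTo],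
      by simp [HasBlackPawn, run_zero, init, St.moveTo], fun i hi => absurd hi ?_⟩
    simp only [not_lt, Fin.le_def]
    omega
  | succ k ih =>
    rw [run_succ] at h ⊢
    rcases h₀ : (run B k).cur with _ | c₀
    · simp [step_of_cur_eq_none h₀] at h
    · rw [step_bs]
      exact isLiveTop_step h₀ (ih h₀) h

lemma count_placesIn_le (r : Fin n) (k : ℕ) :
    Nat.count (fun j => PlacesIn (run B j) r) (k + 1) ≤
      Nat.count (fun j => Evicts (run B j) (B j) r) k + if AtOrBelow (run B k) r then 1 else 0 := by
  induction k with
  | zero =>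
    have hinit : PlacesIn (init (n := n)) r → AtOrBelow init r := by
      rintro ⟨x, hx⟩ c (hc : init.cur = some c)
      obtain rfl : (x, r) = c := Option.some.inj (hx.symm.trans hc)
      exact le_rfl
    rw [Nat.count_one, Nat.count_zero, zero_add, run_zero]
    split_ifs <;> simp_all
  | succ k ih =>
    rw [Nat.count_succ (fun j => PlacesIn (run B j) r) (k + 1),
      Nat.count_succ (fun j => Evicts (run B j) (B j) r) k, run_succ]
    have := step_placesIn_add_le (s := run B k) (b := B k) r
    omega

lemma count_placesIn_le_pow {k : ℕ} (hB : ∀ j < k, ¬ BViol n B j) (r : Fin n) :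
    Nat.count (fun j => PlacesIn (run B j) r) (k + 1) ≤ 2 ^ (r : ℕ) := by
  have hev : Nat.count (fun j => Evicts (run B j) (B j) r) k < 2 ^ (r : ℕ) := by
    refine (Nat.count_mono_left (q := fun j => BlackPawnBelow r (B j))
      fun j _ ⟨c, _, hcr, m, hm, hBj⟩ => ⟨c.1, m, lt_of_lt_of_le hm hcr, hBj⟩).trans_lt ?_
    rcases k with _ | k
    · simp
    · exact count_blackPawnBelow_lt B (hB k k.lt_succ_self) r
  have := count_placesIn_le B r k
  split_ifs at this <;> omega

lemma not_wViol_run {k : ℕ} (hB : ∀ j < k, ¬ BViol n B j) :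
    ¬ WViol n (fun j => (run B j).out) k := by
  rintro ⟨r, hr⟩
  change 2 ^ (r : ℕ) < {j | j ≤ k ∧ PlacesIn (run B j) r}.ncard at hr
  rw [ncard_setOf_le_and_eq_count] at hr
  exact (count_placesIn_le_pow B hB r).not_gt hr

lemma cur_run_of_out_eq_some {k : ℕ} {c : Cell n} (h : (run B k).out = some c) :
    (run B k).cur = some c := by
  cases k with
  | zero => exact h
  | succ k => rw [run_succ] at h ⊢; exact cur_step_of_out_eq_some h

lemma bViol_of_column_blackened {k : ℕ} {x : Fin (2 ^ n)}
    (h : ∀ j : Fin n, Blackened (run B (k + 1)).bs (x, j)) : BViol n B k := by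
  refine .inr ⟨x, ?_⟩
  have hall : {i : Fin n | ∃ j ≤ k, B j = some (.inr (x, i))} = Set.univ :=
    Set.eq_univ_of_forall fun i => by
      obtain ⟨j, hj, hBj⟩ := (blackened_run_bs B).mp (h i)
      exact ⟨j, Nat.lt_succ_iff.mp hj, hBj⟩
  rw [hall, Set.ncard_univ, Nat.card_eq_fintype_card, Fintype.card_fin]
  exact Nat.div_lt_self (Nat.pos_of_neZero n) one_lt_two

lemma bViol_of_forall_not_cleanColumn {k : ℕ} (h : ∀ x, ¬ CleanColumn (run B (k + 1)).bs x) :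
    BViol n B k := by
  by_contra hk
  have hpawn : ∀ x : Fin (2 ^ n), ∃ j ∈ range (k + 1),
      BlackPawnBelow (n - 1) (B j) ∧ ∃ m, B j = some (.inl (x, m)) := fun x => by
    obtain ⟨m, hm, hpm⟩ :
        ∃ m : Fin n, (m : ℕ) + 1 < n ∧ HasBlackPawn (run B (k + 1)).bs (x, m) := by
      simpa [CleanColumn] using h x
    obtain ⟨j, hj, hBj⟩ := (hasBlackPawn_run_bs B).mp hpm
    exact ⟨j, mem_range.mpr hj, ⟨x, m, by omega, hBj⟩, m, hBj⟩
  choose f hf using hpawn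
  have hinj : Set.InjOn f (univ : Finset (Fin (2 ^ n))) := fun x _ y _ hxy => by
    obtain ⟨m, hm⟩ := (hf x).2.2
    obtain ⟨m', hm'⟩ := (hf y).2.2
    rw [hxy, hm'] at hm
    exact (Prod.ext_iff.mp (Sum.inl_injective (Option.some_injective _ hm))).1.symm
  have hcard := card_le_card_of_injOn (t := {j ∈ range (k + 1) | BlackPawnBelow (n - 1) (B j)}) f
    (fun x _ => mem_filter.mpr ⟨(hf x).1, (hf x).2.1⟩) hinj
  rw [card_univ, Fintype.card_fin, ← Nat.count_eq_card_filter_range] at hcard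
  have := count_blackPawnBelow_lt B hk (n - 1)
  have : 2 ^ (n - 1) ≤ 2 ^ n := Nat.pow_le_pow_right two_pos (Nat.sub_le n 1)
  omega

lemma run_cur_ne_none (hB : ∀ k, ¬ BViol n B k) (k : ℕ) : (run B k).cur ≠ none := by
  induction k with
  | zero => simp [run_zero, init, St.moveTo]
  | succ k ih =>
    obtain ⟨c, hc⟩ := Option.ne_none_iff_exists'.mp ih
    intro h
    rw [run_succ] at h
    rcases step_cur_eq_none hc (isLiveTop_run B hc) h with ⟨x, hx⟩ | hx <;>
      rw [← step_bs, ← run_succ] at hx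
    exacts [hB k (bViol_of_column_blackened B hx), hB k (bViol_of_forall_not_cleanColumn B hx)]

lemma finite_setOf_out_ne_none (hB : ∀ k, ¬ BViol n B k) :
    {j | (run B j).out ≠ none}.Finite := by
  refine (Set.finite_iUnion fun r : Fin n => finite_setOf_of_count_le fun k =>
    (Nat.count_monotone _ k.le_succ).trans (count_placesIn_le_pow B (fun j _ => hB j) r)).subset ?_
  intro j hj
  obtain ⟨⟨x, r⟩, hxr⟩ := Option.ne_none_iff_exists'.mp hj
  exact Set.mem_iUnion.mpr ⟨r, x, hxr⟩

lemma pawn_safe_after_last_placement (hB : ∀ k, ¬ BViol n B k) {K : ℕ} {c : Cell n}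
    (hlast : ∀ j, K < j → (run B j).out = none) (hc : (run B K).cur = some c) {j : ℕ}
    (hj : K ≤ j) :
    (run B j).cur = some c ∧ B j ≠ some (.inr c) ∧
      ∀ m < c.2, B j ≠ some (.inl (c.1, m)) := by
  have hpass : ∀ j, K ≤ j → (run B j).cur = some c →
      (run B (j + 1)).cur = some c ∧ B j ≠ some (.inr c) ∧
        ∀ m < c.2, B j ≠ some (.inl (c.1, m)) := fun j hj hcj => by
    have hout := hlast (j + 1) (by omega)
    have hcur := run_cur_ne_none B hB (j + 1)
    rw [run_succ] at hout hcur ⊢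
    exact step_of_out_eq_none hcj hout hcur
  have hstay : (run B j).cur = some c := by
    induction j, hj using Nat.le_induction with
    | base => exact hc
    | succ j hj ih => exact (hpass j hj ih).1
  exact ⟨hstay, (hpass j hj hstay).2⟩

theorem alive_run (hB : ∀ k, ¬ BViol n B k) : Alive n (fun j => (run B j).out) B := by
  obtain ⟨K, hK, hmax⟩ := Set.exists_max_image _ id (finite_setOf_out_ne_none B hB)
    ⟨0, by simp [run_zero, init, St.moveTo]⟩
  have hlast : ∀ j, K < j → (run B j).out = none := fun j hj => by
    by_contra h
    exact (hmax j h).not_gt hj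
  obtain ⟨c, hc⟩ := Option.ne_none_iff_exists'.mp hK
  have hcK := cur_run_of_out_eq_some B hc
  have hlive := isLiveTop_run B hcK
  refine ⟨K, c.1, c.2, hc, fun j hBj => ?_, fun j m hm hBj => ?_⟩ <;>
    rcases lt_or_ge j K with hj | hj
  · exact hlive.not_blackened ((blackened_run_bs B).mpr ⟨j, hj, hBj⟩)
  · exact (pawn_safe_after_last_placement B hB hlast hcK hj).2.1 hBj
  · exact hlive.no_pawn_below m hm ((hasBlackPawn_run_bs B).mpr ⟨j, hj, hBj⟩)
  · exact (pawn_safe_after_last_placement B hB hlast hcK hj).2.2 m hm hBj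

noncomputable def whiteStrategy : WStrat n := fun bs => (bs.foldl step init).out

lemma wmove_whiteStrategy (τ : BStrat n) :
    wmove n whiteStrategy τ = fun k => (run (bmove n whiteStrategy τ) k).out :=
  funext fun k => by rw [wmove, hist_map_snd]; rfl

end Play

end PawnGame

/-- For every `n ≥ 1`, White has a winning strategy in the game `G n`. -/
theorem stmt_15 (n : ℕ) (hn : 1 ≤ n) :
    ∃ σ : WStrat n, ∀ τ : BStrat n, WhiteWins n (wmove n σ τ) (bmove n σ τ) := by
  have : NeZero n := ⟨by omega⟩
  refine ⟨PawnGame.whiteStrategy, fun τ => ?_⟩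
  rw [PawnGame.wmove_whiteStrategy]
  set B := bmove n PawnGame.whiteStrategy τ
  by_cases hB : ∃ k, BViol n B k
  · classical
    refine .inl ⟨Nat.find hB, Nat.find_spec hB, fun j hj => PawnGame.not_wViol_run B ?_⟩
    exact fun j' hj' => Nat.find_min hB (by omega)
  · push Not at hB
    exact .inr ⟨fun k => PawnGame.not_wViol_run B fun j _ => hB j, hB, PawnGame.alive_run B hB⟩
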